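/- arXiv:1901.03274 — 3 statements merged into one kernel-verified Lean document; each statement's English description precedes it below -/
import Mathlib

section
/- Let F be a field, K a positive integer, S, T ⊆ {1,…,K} with |S| = |T|, and B ∈ F^{S×K}. If the matrix formed by stacking B and the standard basis rows e_k, k ∈ K∖T, has rank K, then there exists a bijection σ : S → T such that B_{j,σ(j)} ≠ 0 for all j ∈ S. -/
/-!
The rank condition says that the rows of `B` together with the unit rows `e_k`, `k ∉ T`, are
linearly independent. Restricting vectors to the coordinates in `T` kills only the span of those
unit rows, so the rows of the square submatrix `B(S, T)` stay independent and its determinant is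
nonzero. A nonzero term of the Leibniz expansion of that determinant is the required bijection.
-/

open Submodule Set

namespace Matrix

variable {R m n : Type*}

theorem exists_perm_forall_ne_zero_of_det_ne_zero [CommRing R] [Fintype n] [DecidableEq n]
    {A : Matrix n n R} (h : A.det ≠ 0) : ∃ σ : Equiv.Perm n, ∀ i, A (σ i) i ≠ 0 := by
  contrapose! h
  rw [det_apply]
  refine Finset.sum_eq_zero fun σ _ => ?_
  obtain ⟨i, hi⟩ := h σ
  rw [Finset.prod_eq_zero (f := fun j => A (σ j) j) (Finset.mem_univ i) hi, smul_zero]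

theorem linearIndependent_row_iff_rank_eq_card [Field R] [Fintype m] [Fintype n]
    {M : Matrix m n R} : LinearIndependent R M.row ↔ M.rank = Fintype.card m := by
  rw [rank_eq_finrank_span_row, linearIndependent_iff_card_eq_finrank_span, Set.finrank, eq_comm]

end Matrix

section

variable {F m n ι : Type*} [Field F] [Fintype n] [DecidableEq n]

theorem mem_span_range_single_of_forall_mem_eq_zero {T : Finset n} {w : n → F}
    (hw : ∀ t ∈ T, w t = 0) :
    w ∈ span F (range fun k : {k // k ∉ T} => Pi.single k.1 (1 : F)) := by
  refine (mem_span_range_iff_exists_fun F).2 ⟨fun k => w k, funext fun c => ?_⟩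
  rw [Finset.sum_apply]
  by_cases hc : c ∈ T
  · rw [hw c hc]
    refine Finset.sum_eq_zero fun k _ => ?_
    rw [Pi.smul_apply, Pi.single_apply, if_neg (by rintro rfl; exact k.2 hc), smul_zero]
  · rw [Fintype.sum_eq_single ⟨c, hc⟩ fun k hk => ?_]
    · simp
    · rw [Pi.smul_apply, Pi.single_apply, if_neg fun h => hk (Subtype.ext h.symm), smul_zero]

theorem linearIndependent_row_submatrix_of_sum_elim_single {T : Finset n}
    {B : Matrix m n F} {f : ι → n} (hf : ∀ t ∈ T, t ∈ range f)
    (h : LinearIndependent F (Sum.elim B.row fun k : {k // k ∉ T} => Pi.single k.1 (1 : F))) :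
    LinearIndependent F (B.submatrix id f).row := by
  obtain ⟨hB, -, hdisj⟩ := linearIndependent_sum.1 h
  refine hB.map (f := LinearMap.funLeft F F f) (hdisj.mono_right fun w hw => ?_)
  refine mem_span_range_single_of_forall_mem_eq_zero fun t ht => ?_
  obtain ⟨i, rfl⟩ := hf t ht
  exact congrFun hw i

end

theorem stmt_2_general (F : Type*) [Field F] (K : ℕ)
    (S T : Finset (Fin K)) (hST : S.card = T.card)
    (B : Matrix {k : Fin K // k ∈ S} (Fin K) F)
    (hrank : (Matrix.of (Sum.elim (fun s : {k : Fin K // k ∈ S} => B s)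
        (fun k : {k : Fin K // k ∉ T} => fun c : Fin K => if c = k.1 then (1 : F) else 0))).rank
      = K) :
    ∃ σ : {k : Fin K // k ∈ S} ≃ {k : Fin K // k ∈ T},
      ∀ j : {k : Fin K // k ∈ S}, B j ((σ j : {k : Fin K // k ∈ T}) : Fin K) ≠ 0 := by
  classical
  have hrows :
      LinearIndependent F (Sum.elim B.row fun k : {k // k ∉ T} => Pi.single k.1 (1 : F)) := by
    have hcard : Fintype.card ({k // k ∈ S} ⊕ {k // k ∉ T}) = K := by
      have hTK : T.card ≤ K := by simpa using T.card_le_univ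
      simp only [Fintype.card_sum, Fintype.card_subtype_compl, Fintype.card_coe, Fintype.card_fin,
        hST]
      omega
    convert Matrix.linearIndependent_row_iff_rank_eq_card.2 (hrank.trans hcard.symm) using 1
    ext (i | k) c <;> simp [Pi.single_apply]
  let e : {k // k ∈ S} ≃ {k // k ∈ T} := Fintype.equivOfCardEq (by simp [hST])
  have hdet : (B.submatrix id (Subtype.val ∘ e)).det ≠ 0 :=
    (Matrix.isUnit_iff_isUnit_det _).1 (Matrix.linearIndependent_rows_iff_isUnit.1
      (linearIndependent_row_submatrix_of_sum_elim_single
        (fun t ht => ⟨e.symm ⟨t, ht⟩, by simp⟩) hrows)) |>.ne_zero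
  obtain ⟨σ, hσ⟩ := Matrix.exists_perm_forall_ne_zero_of_det_ne_zero hdet
  exact ⟨σ.symm.trans e, fun j => by simpa using hσ (σ.symm j)⟩

theorem stmt_2 (F : Type*) [Field F] (K : ℕ) (hK : 0 < K)
    (S T : Finset (Fin K)) (hST : S.card = T.card)
    (B : Matrix {k : Fin K // k ∈ S} (Fin K) F)
    (hrank : (Matrix.of (Sum.elim (fun s : {k : Fin K // k ∈ S} => B s)
        (fun k : {k : Fin K // k ∉ T} => fun c : Fin K => if c = k.1 then (1 : F) else 0))).rank
      = K) :
    ∃ σ : {k : Fin K // k ∈ S} ≃ {k : Fin K // k ∈ T},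
      ∀ j : {k : Fin K // k ∈ S}, B j ((σ j : {k : Fin K // k ∈ T}) : Fin K) ≠ 0 :=
  stmt_2_general F K S T hST B hrank
end

section
/- Let F be a finite field with q elements, κ_1, …, κ_K ≥ 0 arbitrary integers all at most κ, and for each k let V_k ⊆ F^{1×κ} be the set of vectors supported on the first κ_k coordinates. Let B ∈ F^{L×K} have full row rank L ≤ K. Then the number of distinct matrices B·M, as M ranges over matrices with k-th row in V_k, is at most max_T ∏_{k∈T} q^{κ_k}, where the maximum is over all subsets T ⊆ {1,…,K} of size L such that the stacked matrix [B; I(K∖T)] has rank K. -/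
/-!
Choose the pivot set `T` greedily: scan the columns `B_k` in order of decreasing `κ_k` and keep a
column when it is not in the span of those kept so far. Then `(B_t)_{t ∈ T}` is a basis of the
column space, so `|T| = rank B = L` and `[B; I(K∖T)]` has trivial kernel; moreover every `B_k` is a
combination of pivot columns `B_t` with `κ_t ≥ κ_k`. Column `i` of `B M` is a combination of the
`B_k` with `κ_k > i`, hence of pivot columns with `κ_t > i`; so `B M = B M'` for some `M'` with the
same support pattern and zero rows off `T`, and there are at most `∏_{t ∈ T} q^{κ_t}` such `M'`.
-/

open Matrix Submodule

section Greedy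

variable {ι K V α : Type*} [DivisionRing K] [AddCommGroup V] [Module K V] [LinearOrder α]

theorem Finset.exists_linearIndepOn_subset_forall_mem_span_of_le [DecidableEq ι]
    (v : ι → V) (w : ι → α) (s : Finset ι) :
    ∃ T ⊆ s, LinearIndepOn K v (T : Set ι) ∧
      ∀ j ∈ s, v j ∈ span K (v '' {k | k ∈ T ∧ w j ≤ w k}) := by
  induction s using Finset.induction_on_min_value w with
  | empty => exact ⟨∅, subset_rfl, by simp, by simp⟩
  | insert a s _ ha_min ih =>
    obtain ⟨T, hTs, hT, hspan⟩ := ih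
    by_cases ha : v a ∈ span K (v '' T)
    · refine ⟨T, hTs.trans (Finset.subset_insert a s), hT, ?_⟩
      intro j hj
      rcases Finset.mem_insert.mp hj with rfl | hj
      · exact span_mono (Set.image_mono <| Set.ofPred_subset_ofPred.mpr fun k hk =>
          ⟨hk, ha_min k (hTs hk)⟩) ha
      · exact hspan j hj
    · refine ⟨insert a T, Finset.insert_subset_insert a hTs, ?_, ?_⟩
      · rw [Finset.coe_insert]; exact hT.insert ha
      intro j hj
      rcases Finset.mem_insert.mp hj with rfl | hj
      · exact subset_span ⟨j, ⟨Finset.mem_insert_self j T, le_rfl⟩, rfl⟩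
      · exact span_mono (Set.image_mono <| Set.ofPred_subset_ofPred.mpr fun _ hk =>
          ⟨Finset.mem_insert_of_mem hk.1, hk.2⟩) (hspan j hj)

end Greedy

section Columns

variable {m n F : Type*} [Fintype n]

theorem Matrix.linearCombination_col [CommSemiring F] (B : Matrix m n F) (l : n →₀ F) :
    Finsupp.linearCombination F B.col l = B *ᵥ ⇑l := by
  ext a
  simp [Finsupp.linearCombination_apply, Finsupp.sum_fintype, Matrix.mulVec, dotProduct,
    Finset.sum_apply, mul_comm]

theorem Matrix.mem_span_col_image_iff [CommSemiring F] (B : Matrix m n F) (s : Set n)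
    (v : m → F) : v ∈ span F (B.col '' s) ↔ ∃ y : n → F, (∀ k ∉ s, y k = 0) ∧ B *ᵥ y = v := by
  rw [Finsupp.mem_span_image_iff_linearCombination]
  constructor
  · rintro ⟨l, hl, rfl⟩
    exact ⟨l, fun k hk => Finsupp.notMem_support_iff.mp fun h => hk (hl h),
      (B.linearCombination_col l).symm⟩
  · rintro ⟨y, hy, rfl⟩
    refine ⟨Finsupp.equivFunOnFinite.symm y, fun k hk => ?_, B.linearCombination_col _⟩
    by_contra h
    exact Finsupp.mem_support_iff.mp hk (hy k h)

theorem Matrix.eq_zero_of_mulVec_eq_zero_of_linearIndepOn [CommRing F] {B : Matrix m n F}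
    {s : Set n} (hs : LinearIndepOn F B.col s) {y : n → F} (hy : ∀ k ∉ s, y k = 0)
    (hBy : B *ᵥ y = 0) : y = 0 := by
  have hl := linearIndepOn_iff.mp hs (Finsupp.equivFunOnFinite.symm y)
    (fun k hk => by_contra fun h => Finsupp.mem_support_iff.mp hk (hy k h))
    (by rw [B.linearCombination_col]; exact hBy)
  simpa using congrArg (⇑) hl

variable [Field F]

theorem Matrix.rank_sumElim_compl_single_eq_card [DecidableEq n] {B : Matrix m n F} {T : Finset n}
    (hT : LinearIndepOn F B.col (T : Set n)) :
    (Matrix.of (Sum.elim (fun j : m => B j)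
      (fun k : {k : n // k ∉ T} => fun c : n => if c = k.1 then (1 : F) else 0))).rank
      = Fintype.card n := by
  rw [Matrix.rank, LinearMap.finrank_range_of_inj, Module.finrank_fintype_fun_eq_card]
  rw [← LinearMap.ker_eq_bot, LinearMap.ker_eq_bot']
  intro x hx
  have hrow := congrFun hx
  refine B.eq_zero_of_mulVec_eq_zero_of_linearIndepOn hT (fun k hk => ?_) (funext fun a => ?_)
  · simpa [mulVec, dotProduct] using hrow (Sum.inr ⟨k, hk⟩)
  · simpa [mulVec, dotProduct] using hrow (Sum.inl a)

theorem Matrix.card_eq_rank_of_linearIndepOn {B : Matrix m n F} {T : Finset n}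
    (hT : LinearIndepOn F B.col (T : Set n)) (hspan : ∀ k, B.col k ∈ span F (B.col '' T)) :
    T.card = B.rank := by
  have hspan_eq : span F (Set.range B.col) = span F (B.col '' T) :=
    le_antisymm (span_le.mpr (Set.range_subset_iff.mpr hspan))
      (span_mono (Set.image_subset_range _ _))
  rw [rank_eq_finrank_span_cols, hspan_eq, Set.image_eq_range, finrank_span_eq_card hT]
  simp

variable {α : Type*} [LinearOrder α] {B : Matrix m n F} {T : Finset n} {w : n → α}

theorem Matrix.exists_mulVec_eq_of_col_mem_span
    (hspan : ∀ k, B.col k ∈ span F (B.col '' {t | t ∈ T ∧ w k ≤ w t}))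
    {x : n → F} {i : α} (hx : ∀ k, w k ≤ i → x k = 0) :
    ∃ y : n → F, (∀ k ∉ T, y k = 0) ∧ (∀ k, w k ≤ i → y k = 0) ∧ B *ᵥ y = B *ᵥ x := by
  have hle : span F (B.col '' {k | i < w k}) ≤ span F (B.col '' {t | t ∈ T ∧ i < w t}) :=
    span_le.mpr <| by
      rintro _ ⟨k, hk, rfl⟩
      exact span_mono (Set.image_mono <| Set.ofPred_subset_ofPred.mpr fun t ht =>
        ⟨ht.1, lt_of_lt_of_le hk ht.2⟩) (hspan k)
  obtain ⟨y, hy, hBy⟩ := (B.mem_span_col_image_iff _ _).mp <|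
    hle ((B.mem_span_col_image_iff _ _).mpr ⟨x, fun k hk => hx k (not_lt.mp hk), rfl⟩)
  exact ⟨y, fun k hk => hy k fun h => hk h.1, fun k hk => hy k fun h => (not_lt.mpr hk) h.2, hBy⟩

theorem Matrix.exists_mul_eq_of_col_mem_span {o : Type*}
    (hspan : ∀ k, B.col k ∈ span F (B.col '' {t | t ∈ T ∧ w k ≤ w t}))
    (θ : o → α) {M : Matrix n o F} (hM : ∀ k j, w k ≤ θ j → M k j = 0) :
    ∃ M' : Matrix n o F, (∀ k ∉ T, ∀ j, M' k j = 0) ∧ (∀ k j, w k ≤ θ j → M' k j = 0) ∧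
      B * M' = B * M := by
  choose y hyT hyw hBy using fun j =>
    exists_mulVec_eq_of_col_mem_span hspan (x := M.col j) (i := θ j) (hM · j)
  refine ⟨Matrix.of fun k j => y j k, fun k hk j => hyT j k hk, fun k j hk => hyw j k hk, ?_⟩
  ext a j
  simpa [mul_apply, mulVec, dotProduct] using congrFun (hBy j) a

end Columns

theorem ncard_matrix_supported_le {n F : Type*} [Zero F] [Fintype F] (T : Finset n) (κ : ℕ)
    (w : n → ℕ) :
    {M : Matrix n (Fin κ) F | (∀ k ∉ T, ∀ i, M k i = 0) ∧
      ∀ k (i : Fin κ), w k ≤ i → M k i = 0}.ncard ≤ ∏ k ∈ T, Fintype.card F ^ w k := by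
  set S := {M : Matrix n (Fin κ) F | (∀ k ∉ T, ∀ i, M k i = 0) ∧
      ∀ k (i : Fin κ), w k ≤ i → M k i = 0}
  let restrict : S → ((t : T) → Fin (w t) → F) := fun M t i =>
    if h : (i : ℕ) < κ then M.1 t ⟨i, h⟩ else 0
  have hinj : Function.Injective restrict := by
    intro M M' h
    ext k i
    by_cases hk : k ∈ T
    · by_cases hi : (i : ℕ) < w k
      · simpa [restrict] using congrFun (congrFun h ⟨k, hk⟩) ⟨i, hi⟩
      · rw [M.2.2 k i (not_lt.mp hi), M'.2.2 k i (not_lt.mp hi)]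
    · rw [M.2.1 k hk i, M'.2.1 k hk i]
  calc S.ncard = Nat.card S := (Nat.card_coe_set_eq S).symm
    _ ≤ Nat.card ((t : T) → Fin (w t) → F) := Nat.card_le_card_of_injective restrict hinj
    _ = ∏ k ∈ T, Fintype.card F ^ w k := by
      simp only [Nat.card_pi, Nat.card_eq_fintype_card, Fintype.card_fun, Fintype.card_fin]
      exact Finset.prod_coe_sort T (Fintype.card F ^ w ·)

theorem stmt_10_general (F : Type*) [Field F] [Fintype F]
    (K L κ : ℕ) (κk : Fin K → ℕ)
    (B : Matrix (Fin L) (Fin K) F) (hrank : B.rank = L) :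
    ∃ T : Finset (Fin K), T.card = L ∧
      (Matrix.of (Sum.elim (fun j : Fin L => B j)
          (fun k : {k : Fin K // k ∉ T} => fun c : Fin K => if c = k.1 then (1 : F) else 0))).rank
        = K ∧
      ((fun M : Matrix (Fin K) (Fin κ) F => B * M) ''
          {M | ∀ (k : Fin K) (i : Fin κ), κk k ≤ (i : ℕ) → M k i = 0}).ncard
        ≤ ∏ k ∈ T, (Fintype.card F) ^ κk k := by
  obtain ⟨T, -, hT, hspan⟩ :=
    Finset.exists_linearIndepOn_subset_forall_mem_span_of_le (K := F) B.col κk Finset.univ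
  have hcard : T.card = L := by
    refine (B.card_eq_rank_of_linearIndepOn hT fun k => ?_).trans hrank
    exact span_mono (Set.image_mono fun t ht => ht.1) (hspan k (Finset.mem_univ k))
  refine ⟨T, hcard, by simpa using B.rank_sumElim_compl_single_eq_card hT, ?_⟩
  have himage : (B * ·) '' {M | ∀ (k : Fin K) (i : Fin κ), κk k ≤ (i : ℕ) → M k i = 0} ⊆
      (B * ·) '' {M | (∀ k ∉ T, ∀ i, M k i = 0) ∧ ∀ k (i : Fin κ), κk k ≤ i → M k i = 0} := by
    rintro _ ⟨M, hM, rfl⟩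
    obtain ⟨M', hM'T, hM'κ, hBM'⟩ := B.exists_mul_eq_of_col_mem_span
      (fun k => hspan k (Finset.mem_univ k)) (fun i : Fin κ => (i : ℕ)) hM
    exact ⟨M', ⟨hM'T, hM'κ⟩, hBM'⟩
  calc _ ≤ _ := Set.ncard_le_ncard himage (Set.toFinite _)
    _ ≤ _ := Set.ncard_image_le (Set.toFinite _)
    _ ≤ _ := ncard_matrix_supported_le T κ κk

theorem stmt_10 (F : Type*) [Field F] [Fintype F] [DecidableEq F]
    (K L κ : ℕ) (hL : 1 ≤ L) (hLK : L ≤ K)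
    (κk : Fin K → ℕ) (hκ : ∀ k : Fin K, κk k ≤ κ)
    (B : Matrix (Fin L) (Fin K) F) (hrank : B.rank = L) :
    ∃ T : Finset (Fin K), T.card = L ∧
      (Matrix.of (Sum.elim (fun j : Fin L => B j)
          (fun k : {k : Fin K // k ∉ T} => fun c : Fin K => if c = k.1 then (1 : F) else 0))).rank
        = K ∧
      ((fun M : Matrix (Fin K) (Fin κ) F => B * M) ''
          {M | ∀ (k : Fin K) (i : Fin κ), κk k ≤ (i : ℕ) → M k i = 0}).ncard
        ≤ ∏ k ∈ T, (Fintype.card F) ^ κk k :=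
  stmt_10_general F K L κ κk B hrank
end

section
/- Let F be a field, B ∈ F^{L×K}, C ∈ F^{m×L}, and let S* ⊆ {1,…,L} be produced by the greedy algorithm (i is added to S* iff e_i ∉ span of rows of C and {e_j : j ∈ S*, j < i}). Then for every j with 1 ≤ j ≤ L, the row span of the stacked matrix [C·B; B^{(j)}] equals the row span of [C·B; B(S* ∩ {1,…,j})], where B^{(j)} denotes the first j rows of B and B(S' ) denotes the rows of B indexed by S'. -/
theorem stmt_14 (F : Type*) [Field F] (L K m : ℕ)
    (B : Matrix (Fin L) (Fin K) F) (C : Matrix (Fin m) (Fin L) F)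
    (S : Finset (Fin L))
    (hgreedy : ∀ i : Fin L, i ∈ S ↔
      (Pi.single i (1 : F) : Fin L → F) ∉
        Submodule.span F
          (Set.range (fun a : Fin m => C a) ∪
           {v : Fin L → F | ∃ j ∈ S, j < i ∧ v = Pi.single j (1 : F)})) :
    ∀ j : Fin L,
      Submodule.span F
        (Set.range (fun a : Fin m => (C * B) a) ∪
         {v : Fin K → F | ∃ i : Fin L, i ≤ j ∧ v = B i})
      = Submodule.span F
        (Set.range (fun a : Fin m => (C * B) a) ∪
         {v : Fin K → F | ∃ i ∈ S, i ≤ j ∧ v = B i}) := by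
  intro j
  have hf1 : ∀ a : Fin m, Matrix.vecMulLinear B (C a) = (C * B) a := by
    intro a; funext k
    simp [Matrix.vecMulLinear_apply, Matrix.vecMul, Matrix.mul_apply,
      dotProduct]
  have hf2 : ∀ i : Fin L, Matrix.vecMulLinear B (Pi.single i (1 : F)) = B i := by
    intro i; funext k
    simp [Matrix.vecMulLinear_apply, Matrix.vecMul, dotProduct,
      Pi.single_apply]
  apply le_antisymm
  · rw [Submodule.span_le]
    rintro v (⟨a, rfl⟩ | ⟨i, hij, rfl⟩)
    · exact Submodule.subset_span (Or.inl ⟨a, rfl⟩)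
    · by_cases hiS : i ∈ S
      · exact Submodule.subset_span (Or.inr ⟨i, hiS, hij, rfl⟩)
      · have hmem : (Pi.single i (1 : F) : Fin L → F) ∈
            Submodule.span F
              (Set.range (fun a : Fin m => C a) ∪
               {v : Fin L → F | ∃ k ∈ S, k < i ∧ v = Pi.single k (1 : F)}) := by
          by_contra h
          exact hiS ((hgreedy i).mpr h)
        have himg := Submodule.apply_mem_span_image_of_mem_span
          (Matrix.vecMulLinear B) hmem
        rw [← hf2 i]
        refine Submodule.span_le.mpr ?_ himg
        rintro w ⟨u, (⟨a, rfl⟩ | ⟨k, hkS, hki, rfl⟩), rfl⟩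
        · exact Submodule.subset_span (Or.inl ⟨a, (hf1 a).symm ▸ rfl⟩)
        · rw [hf2 k]
          exact Submodule.subset_span (Or.inr ⟨k, hkS, le_of_lt (lt_of_lt_of_le hki hij), rfl⟩)
  · apply Submodule.span_mono
    rintro v (hv | ⟨i, _, hij, rfl⟩)
    · exact Or.inl hv
    · exact Or.inr ⟨i, hij, rfl⟩
end
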